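/- For fixed β > 0 and r ≥ 0, the rescaled Matérn correlation M_{ν, β/(2√ν)}(r) = (2^{1−ν}/Γ(ν)) (2√ν r/β)^ν K_ν(2√ν r/β) converges to exp(−r²/β²) as ν → ∞, uniformly on compact subsets of [0,∞). -/

import Mathlib

open Real Filter

/-- Modified Bessel function of the second kind of order `ν`, via its integral
representation for positive argument. -/
noncomputable def besselK (ν x : ℝ) : ℝ :=
  ∫ t in Set.Ioi (0 : ℝ), Real.exp (-x * Real.cosh t) * Real.cosh (ν * t)

/-- The Matérn correlation function with smoothness `ν` and scale `b`. -/
noncomputable def matern (ν b r : ℝ) : ℝ :=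
  if r = 0 then 1
  else 2 ^ (1 - ν) / Real.Gamma ν * (r / b) ^ ν * besselK ν (r / b)

/-!
Writing `K_ν(x)` as `∫_ℝ e^{-x cosh t} e^{νt} dt / 2` and substituting `u = (x/2) eᵗ` gives
`2 (x/2)^ν K_ν(x) = ∫₀^∞ e^{-u - x²/(4u)} u^{ν-1} du`. Hence the rescaled Matérn correlation is
`E[exp(-ν c / U)]` with `c = r²/β²` and `U ∼ Gamma(ν, 1)`. As `t ↦ e^{-ct}` is `c`-Lipschitz on
`[0, ∞)` and `E(ν/U - 1)² = (ν + 2)/((ν - 1)(ν - 2)) = O(1/ν)`, this expectation is within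
`2c/√(ν - 2)` of `e^{-c}`, uniformly for `c` in a bounded set.
-/

open MeasureTheory Set Topology

lemma integrableOn_exp_neg_sub_div_mul_rpow {a y : ℝ} (ha : 0 < a) (hy : 0 ≤ y) :
    IntegrableOn (fun u => exp (-u - y / u) * u ^ (a - 1)) (Ioi 0) := by
  refine (GammaIntegral_convergent ha).mono' ?_ ?_
  · refine ContinuousOn.aestronglyMeasurable ?_ measurableSet_Ioi
    exact ((continuousOn_id.neg.sub (continuousOn_const.div continuousOn_id
      fun u hu => (mem_Ioi.1 hu).ne')).rexp).mul
      (continuousOn_id.rpow_const fun u hu => Or.inl (mem_Ioi.1 hu).ne')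
  · filter_upwards [ae_restrict_mem measurableSet_Ioi] with u (hu : 0 < u)
    rw [norm_of_nonneg (by positivity)]
    gcongr
    linarith [div_nonneg hy hu.le]

lemma integral_mul_cosh_eq_integral_mul_exp {g : ℝ → ℝ} (hg : ∀ t, g (-t) = g t) {ν : ℝ}
    (hint : Integrable fun t => g t * exp (ν * t)) :
    ∫ t, g t * cosh (ν * t) = ∫ t, g t * exp (ν * t) := by
  have hint' : Integrable fun t => g t * exp (-(ν * t)) := by
    simpa [hg] using hint.comp_neg
  have hneg : ∫ t, g t * exp (-(ν * t)) = ∫ t, g t * exp (ν * t) := by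
    rw [← integral_neg_eq_self]
    simp [hg]
  calc ∫ t, g t * cosh (ν * t)
      = ∫ t, (g t * exp (ν * t) + g t * exp (-(ν * t))) / 2 := by
        congr 1 with t
        rw [cosh_eq]
        ring
    _ = ∫ t, g t * exp (ν * t) := by
        rw [integral_div, integral_add hint hint', hneg]
        ring

lemma integral_exp_neg_mul_cosh_mul_cosh_eq_two_mul_besselK (ν x : ℝ) :
    ∫ t, exp (-x * cosh t) * cosh (ν * t) = 2 * besselK ν x := by
  rw [besselK, ← integral_comp_abs]
  congr 1 with t
  rcases abs_choice t with h | h <;> simp [h]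

lemma image_half_mul_exp {x : ℝ} (hx : 0 < x) :
    (fun t => x / 2 * exp t) '' univ = Ioi 0 := by
  rw [image_univ, show (fun t => x / 2 * exp t) = (x / 2 * ·) ∘ exp from rfl, range_comp,
    range_exp, image_const_mul_Ioi_zero (by positivity)]

lemma abs_half_mul_exp_smul (ν x t : ℝ) (hx : 0 < x) :
    |x / 2 * exp t| • (exp (-(x / 2 * exp t) - x ^ 2 / (4 * (x / 2 * exp t)))
      * (x / 2 * exp t) ^ (ν - 1)) = (x / 2) ^ ν * (exp (-x * cosh t) * exp (ν * t)) := by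
  have hx2 : 0 < x / 2 := by positivity
  have hexp : -(x / 2 * exp t) - x ^ 2 / (4 * (x / 2 * exp t)) = -x * cosh t := by
    rw [cosh_eq, exp_neg]
    field_simp
    ring
  rw [smul_eq_mul, abs_of_pos (by positivity), hexp, mul_rpow hx2.le (exp_pos t).le,
    ← exp_mul, rpow_sub_one hx2.ne', mul_sub_one, exp_sub]
  field_simp

lemma integral_exp_neg_sub_sq_div_mul_rpow {ν x : ℝ} (hν : 0 < ν) (hx : 0 < x) :
    ∫ u in Ioi 0, exp (-u - x ^ 2 / (4 * u)) * u ^ (ν - 1) = 2 * (x / 2) ^ ν * besselK ν x := by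
  have hderiv : ∀ t ∈ univ, HasDerivWithinAt (fun t => x / 2 * exp t) (x / 2 * exp t) univ t :=
    fun t _ => ((hasDerivAt_exp t).const_mul _).hasDerivWithinAt
  have hinj : InjOn (fun t => x / 2 * exp t) univ := fun s _ t _ h =>
    exp_injective (mul_left_cancel₀ (by positivity) h)
  set g := fun u => exp (-u - x ^ 2 / (4 * u)) * u ^ (ν - 1) with hg
  have hsmul : (fun t => |x / 2 * exp t| • g (x / 2 * exp t))
      = fun t => (x / 2) ^ ν * (exp (-x * cosh t) * exp (ν * t)) :=
    funext fun t => abs_half_mul_exp_smul ν x t hx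
  have hsubst := integral_image_eq_integral_abs_deriv_smul MeasurableSet.univ hderiv hinj g
  have hint := integrableOn_image_iff_integrableOn_abs_deriv_smul MeasurableSet.univ hderiv hinj g
  rw [image_half_mul_exp hx, Measure.restrict_univ, hsmul] at hsubst
  rw [image_half_mul_exp hx, integrableOn_univ, hsmul] at hint
  have hg_int : IntegrableOn g (Ioi 0) := by
    simpa only [hg, div_div] using
      integrableOn_exp_neg_sub_div_mul_rpow hν (by positivity : 0 ≤ x ^ 2 / 4)
  have hint' : Integrable fun t => exp (-x * cosh t) * exp (ν * t) :=
    (integrable_const_mul_iff (rpow_pos_of_pos (by positivity) ν).ne'.isUnit _).1 (hint.1 hg_int)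
  rw [hsubst, integral_const_mul, ← integral_mul_cosh_eq_integral_mul_exp (by simp) hint',
    integral_exp_neg_mul_cosh_mul_cosh_eq_two_mul_besselK]
  ring

lemma matern_eq_integral {ν b r : ℝ} (hν : 0 < ν) (hb : 0 < b) (hr : 0 ≤ r) :
    matern ν b r = (Gamma ν)⁻¹ * ∫ u in Ioi 0, exp (-u - (r / b) ^ 2 / (4 * u)) * u ^ (ν - 1) := by
  have hΓ : 0 < Gamma ν := Gamma_pos_of_pos hν
  rcases hr.eq_or_lt with rfl | hr
  · simp [matern, ← Gamma_eq_integral hν, hΓ.ne']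
  · have hx : 0 < r / b := div_pos hr hb
    rw [matern, if_neg hr.ne', integral_exp_neg_sub_sq_div_mul_rpow hν hx,
      div_rpow hx.le zero_le_two, rpow_sub zero_lt_two, rpow_one]
    field_simp

lemma matern_rescaled_eq_integral {ν β r : ℝ} (hν : 0 < ν) (hβ : 0 < β) (hr : 0 ≤ r) :
    matern ν (β / (2 * √ν)) r
      = (Gamma ν)⁻¹ * ∫ u in Ioi 0, exp (-u - ν * (r ^ 2 / β ^ 2) / u) * u ^ (ν - 1) := by
  have hx : (r / (β / (2 * √ν))) ^ 2 = 4 * (ν * (r ^ 2 / β ^ 2)) := by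
    rw [div_div_eq_mul_div, div_pow, mul_pow, mul_pow, sq_sqrt hν.le]
    ring
  rw [matern_eq_integral hν (by positivity) hr, hx]
  simp_rw [mul_div_mul_left _ _ (four_ne_zero' ℝ)]

lemma exp_neg_mul_rpow_mul_div_sub_one_sq {u : ℝ} (hu : 0 < u) (ν : ℝ) :
    exp (-u) * u ^ (ν - 1) * (ν / u - 1) ^ 2
      = ν ^ 2 * (exp (-u) * u ^ (ν - 2 - 1)) - 2 * ν * (exp (-u) * u ^ (ν - 1 - 1))
        + exp (-u) * u ^ (ν - 1) := by
  have hsub : ∀ k : ℝ, u ^ (k - 1) = u ^ k / u := rpow_sub_one hu.ne'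
  rw [show ν - 2 - 1 = ν - 1 - 1 - 1 by ring]
  simp only [hsub]
  field_simp
  ring

lemma integrableOn_exp_neg_mul_rpow_mul_div_sub_one_sq {ν : ℝ} (hν : 2 < ν) :
    IntegrableOn (fun u => exp (-u) * u ^ (ν - 1) * (ν / u - 1) ^ 2) (Ioi 0) := by
  refine IntegrableOn.congr_fun ?_
    (fun u hu => (exp_neg_mul_rpow_mul_div_sub_one_sq (mem_Ioi.1 hu) ν).symm) measurableSet_Ioi
  exact ((((GammaIntegral_convergent (by linarith)).const_mul _).sub'
    ((GammaIntegral_convergent (by linarith)).const_mul _)).add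
    (GammaIntegral_convergent (by linarith)))

lemma integral_exp_neg_mul_rpow_mul_div_sub_one_sq {ν : ℝ} (hν : 2 < ν) :
    ∫ u in Ioi 0, exp (-u) * u ^ (ν - 1) * (ν / u - 1) ^ 2
      = (ν + 2) / ((ν - 1) * (ν - 2)) * Gamma ν := by
  have h0 := GammaIntegral_convergent (by linarith : 0 < ν)
  have h1 := GammaIntegral_convergent (by linarith : 0 < ν - 1)
  have h2 := GammaIntegral_convergent (by linarith : 0 < ν - 2)
  rw [setIntegral_congr_fun measurableSet_Ioi
      (fun u hu => exp_neg_mul_rpow_mul_div_sub_one_sq (mem_Ioi.1 hu) ν),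
    integral_add ((h2.const_mul _).sub' (h1.const_mul _)) h0,
    integral_sub (h2.const_mul _) (h1.const_mul _), integral_const_mul, integral_const_mul,
    ← Gamma_eq_integral (by linarith), ← Gamma_eq_integral (by linarith),
    ← Gamma_eq_integral (by linarith)]
  have hΓ1 : Gamma ν = (ν - 1) * Gamma (ν - 1) := by
    simpa using Gamma_add_one (by linarith : ν - 1 ≠ 0)
  have hΓ2 : Gamma (ν - 1) = (ν - 2) * Gamma (ν - 2) := by
    simpa [show ν - 2 + 1 = ν - 1 by ring] using Gamma_add_one (by linarith : ν - 2 ≠ 0)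
  have hν1 : ν - 1 ≠ 0 := by linarith
  have hν2 : ν - 2 ≠ 0 := by linarith
  rw [hΓ1, hΓ2]
  field_simp
  ring

lemma abs_exp_neg_sub_exp_neg_le {a b : ℝ} (ha : 0 ≤ a) (hb : 0 ≤ b) :
    |exp (-a) - exp (-b)| ≤ |a - b| := by
  wlog hab : a ≤ b generalizing a b
  · rw [abs_sub_comm, abs_sub_comm a]
    exact this hb ha (le_of_not_ge hab)
  have hsplit : exp (-a) - exp (-b) = exp (-a) * (1 - exp (-(b - a))) := by
    rw [mul_sub, mul_one, ← exp_add]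
    ring_nf
  rw [abs_of_nonneg (by simpa using exp_le_exp.2 (neg_le_neg hab)), abs_sub_comm,
    abs_of_nonneg (sub_nonneg.2 hab), hsplit]
  calc exp (-a) * (1 - exp (-(b - a))) ≤ 1 * (b - a) :=
        mul_le_mul (exp_le_one_iff.2 (by linarith)) (by linarith [one_sub_le_exp_neg (b - a)])
          (sub_nonneg.2 (exp_le_one_iff.2 (by linarith))) zero_le_one
    _ = b - a := one_mul _

-- A quadratic majorant in `t`, so that integrating against the law of `t = ν / U` only needs the
-- second moment of `ν / U`.
lemma abs_exp_neg_mul_sub_exp_neg_le {c s t : ℝ} (hc : 0 ≤ c) (hs : 0 < s) (ht : 0 ≤ t) :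
    |exp (-(c * t)) - exp (-c)| ≤ c / (2 * s) * ((t - 1) ^ 2 + s ^ 2) := by
  have hamgm : |t - 1| ≤ ((t - 1) ^ 2 + s ^ 2) / (2 * s) := by
    rw [le_div_iff₀ (by positivity)]
    nlinarith [two_mul_le_add_sq |t - 1| s, sq_abs (t - 1)]
  calc |exp (-(c * t)) - exp (-c)| ≤ |c * t - c| := abs_exp_neg_sub_exp_neg_le (by positivity) hc
    _ = c * |t - 1| := by rw [← mul_sub_one, abs_mul, abs_of_nonneg hc]
    _ ≤ c * (((t - 1) ^ 2 + s ^ 2) / (2 * s)) := by gcongr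
    _ = c / (2 * s) * ((t - 1) ^ 2 + s ^ 2) := by ring

lemma abs_gamma_mixture_sub_exp_le_of_pos {ν c s : ℝ} (hν : 2 < ν) (hc : 0 ≤ c) (hs : 0 < s) :
    |(Gamma ν)⁻¹ * (∫ u in Ioi 0, exp (-u - ν * c / u) * u ^ (ν - 1)) - exp (-c)|
      ≤ c / (2 * s) * ((ν + 2) / ((ν - 1) * (ν - 2)) + s ^ 2) := by
  have hΓ : 0 < Gamma ν := Gamma_pos_of_pos (by linarith)
  have hw := GammaIntegral_convergent (by linarith : 0 < ν)
  have hf : IntegrableOn (fun u => exp (-u - ν * c / u) * u ^ (ν - 1)) (Ioi 0) :=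
    integrableOn_exp_neg_sub_div_mul_rpow (by linarith) (by positivity)
  have hpoint : ∀ u ∈ Ioi (0 : ℝ),
      ‖exp (-u - ν * c / u) * u ^ (ν - 1) - exp (-c) * (exp (-u) * u ^ (ν - 1))‖
        ≤ c / (2 * s) * (exp (-u) * u ^ (ν - 1) * (ν / u - 1) ^ 2
          + s ^ 2 * (exp (-u) * u ^ (ν - 1))) := by
    intro u (hu : 0 < u)
    have hsplit : exp (-u - ν * c / u) * u ^ (ν - 1) - exp (-c) * (exp (-u) * u ^ (ν - 1))
        = exp (-u) * u ^ (ν - 1) * (exp (-(c * (ν / u))) - exp (-c)) := by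
      rw [show -u - ν * c / u = -u + -(c * (ν / u)) by ring, exp_add]
      ring
    rw [norm_eq_abs, hsplit, abs_mul, abs_of_nonneg (by positivity)]
    calc exp (-u) * u ^ (ν - 1) * |exp (-(c * (ν / u))) - exp (-c)|
        ≤ exp (-u) * u ^ (ν - 1) * (c / (2 * s) * ((ν / u - 1) ^ 2 + s ^ 2)) := by
          gcongr
          exact abs_exp_neg_mul_sub_exp_neg_le hc hs (by positivity)
      _ = _ := by ring
  have hdiff : (Gamma ν)⁻¹ * (∫ u in Ioi 0, exp (-u - ν * c / u) * u ^ (ν - 1)) - exp (-c)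
      = (Gamma ν)⁻¹ * ∫ u in Ioi 0,
          exp (-u - ν * c / u) * u ^ (ν - 1) - exp (-c) * (exp (-u) * u ^ (ν - 1)) := by
    rw [integral_sub hf (hw.const_mul _), integral_const_mul, ← Gamma_eq_integral (by linarith)]
    field_simp
  have hmajorant := ((integrableOn_exp_neg_mul_rpow_mul_div_sub_one_sq hν).add
    (hw.const_mul (s ^ 2))).const_mul (c / (2 * s))
  calc |(Gamma ν)⁻¹ * (∫ u in Ioi 0, exp (-u - ν * c / u) * u ^ (ν - 1)) - exp (-c)|
      ≤ (Gamma ν)⁻¹ * ∫ u in Ioi 0, c / (2 * s)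
          * (exp (-u) * u ^ (ν - 1) * (ν / u - 1) ^ 2 + s ^ 2 * (exp (-u) * u ^ (ν - 1))) := by
        rw [hdiff, abs_mul, abs_of_pos (inv_pos.2 hΓ), ← norm_eq_abs]
        gcongr
        exact norm_integral_le_of_norm_le hmajorant
          ((ae_restrict_iff' measurableSet_Ioi).2 (Eventually.of_forall hpoint))
    _ = c / (2 * s) * ((ν + 2) / ((ν - 1) * (ν - 2)) + s ^ 2) := by
        rw [integral_const_mul, integral_add (integrableOn_exp_neg_mul_rpow_mul_div_sub_one_sq hν)
          (hw.const_mul _), integral_const_mul, ← Gamma_eq_integral (by linarith),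
          integral_exp_neg_mul_rpow_mul_div_sub_one_sq hν]
        field_simp

lemma abs_gamma_mixture_sub_exp_le {ν c : ℝ} (hν : 2 < ν) (hc : 0 ≤ c) :
    |(Gamma ν)⁻¹ * (∫ u in Ioi 0, exp (-u - ν * c / u) * u ^ (ν - 1)) - exp (-c)|
      ≤ 2 * c / √(ν - 2) := by
  have hsqrt : 0 < √(ν - 2) := sqrt_pos.2 (by linarith)
  have hs2 : (2 / √(ν - 2)) ^ 2 = 4 / (ν - 2) := by
    rw [div_pow, sq_sqrt (by linarith)]
    norm_num
  have hmoment : (ν + 2) / ((ν - 1) * (ν - 2)) ≤ (2 / √(ν - 2)) ^ 2 := by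
    rw [hs2, div_le_div_iff₀ (by nlinarith) (by linarith)]
    nlinarith
  calc _ ≤ c / (2 * (2 / √(ν - 2))) * ((ν + 2) / ((ν - 1) * (ν - 2)) + (2 / √(ν - 2)) ^ 2) :=
        abs_gamma_mixture_sub_exp_le_of_pos hν hc (by positivity)
    _ ≤ c / (2 * (2 / √(ν - 2))) * ((2 / √(ν - 2)) ^ 2 + (2 / √(ν - 2)) ^ 2) := by gcongr
    _ = 2 * c / √(ν - 2) := by
        field_simp
        ring

theorem stmt_19 (β : ℝ) (hβ : 0 < β) (K : Set ℝ) (hK : IsCompact K)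
    (hK0 : K ⊆ Set.Ici 0) :
    TendstoUniformlyOn (fun ν r => matern ν (β / (2 * Real.sqrt ν)) r)
      (fun r => Real.exp (-r ^ 2 / β ^ 2)) Filter.atTop K := by
  obtain ⟨C, hC⟩ := hK.bddAbove_image (f := fun r => r ^ 2 / β ^ 2) (by fun_prop)
  have herr : Tendsto (fun ν => 2 * C / √(ν - 2)) atTop (𝓝 0) :=
    tendsto_const_nhds.div_atTop
      (tendsto_sqrt_atTop.comp (tendsto_atTop_add_const_right _ (-2) tendsto_id))
  rw [Metric.tendstoUniformlyOn_iff]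
  intro ε hε
  filter_upwards [eventually_gt_atTop 2, herr.eventually (gt_mem_nhds hε)] with ν hν hνε r hr
  have hr0 : 0 ≤ r := hK0 hr
  rw [dist_comm, dist_eq, matern_rescaled_eq_integral (by linarith) hβ hr0, neg_div]
  calc _ ≤ 2 * (r ^ 2 / β ^ 2) / √(ν - 2) := abs_gamma_mixture_sub_exp_le hν (by positivity)
    _ ≤ 2 * C / √(ν - 2) := by gcongr; exact hC (mem_image_of_mem _ hr)
    _ < ε := hνε
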